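/- arXiv:2012.08647 — 3 statements merged into one kernel-verified Lean document; each statement's English description precedes it below -/
import Mathlib

section
/- For any positive integer q and real c with 0 < c < 1, the sum over even indices k (0 ≤ k ≤ 2q, k even) of Γ(q+1)·c^{k/2} / (Γ(k/2+1)·Γ(q−k/2+1)) is greater than or equal to the sum over odd indices k (1 ≤ k ≤ 2q−1, k odd) of the same expression. -/
/-!
The even sum is `(1 + c) ^ q` by the binomial theorem, and the odd sum is `√c * O q`. Pascal's
rule, which holds for the Γ-binomial coefficients at half-integers too, gives
`O (q + 1) = (1 + c) * O q + β q * (1 + c ^ q)` with `β q = Γ(q + 1) / (Γ(1/2) Γ(q + 3/2))`,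
so `√c * O q / (1 + c) ^ q` is a partial sum of a series of positive terms. Since
`β m = 2/π ∫₀¹ (1 - v²)^m dv`, summing the geometric series under the integral bounds it by
`2/π ∫₀¹ √c (1/(c + v²) + 1/(1 + c v²)) dv = 2/π (arctan (1/√c) + arctan √c) = 1`.
-/

open Real Finset

noncomputable def gammaChoose (x y : ℝ) : ℝ :=
  Gamma (x + y + 1) / (Gamma (x + 1) * Gamma (y + 1))

lemma gammaChoose_comm (x y : ℝ) : gammaChoose x y = gammaChoose y x := by
  rw [gammaChoose, gammaChoose, add_comm x y, mul_comm]

lemma gammaChoose_natCast_sub {n k : ℕ} (h : k ≤ n) :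
    gammaChoose k ((n : ℝ) - k) = n.choose k := by
  rw [gammaChoose, add_sub_cancel, ← Nat.cast_sub h, Gamma_nat_eq_factorial,
    Gamma_nat_eq_factorial, Gamma_nat_eq_factorial, Nat.cast_choose ℝ h]

lemma gammaChoose_eq_sub_one_add {x y : ℝ} (hx : 0 < x) (hy : 0 < y) :
    gammaChoose x y = gammaChoose (x - 1) y + gammaChoose x (y - 1) := by
  have hΓx := Gamma_pos_of_pos hx
  have hΓy := Gamma_pos_of_pos hy
  simp only [gammaChoose, sub_add_cancel, show x - 1 + y + 1 = x + y by ring,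
    show x + (y - 1) + 1 = x + y by ring, Gamma_add_one hx.ne', Gamma_add_one hy.ne',
    Gamma_add_one (add_pos hx hy).ne']
  field_simp

lemma add_one_mul_gammaChoose_add_one {x y : ℝ} (hy : y + 1 ≠ 0) (hxy : x + y + 1 ≠ 0) :
    (y + 1) * gammaChoose x (y + 1) = (x + y + 1) * gammaChoose x y := by
  rw [gammaChoose, gammaChoose, ← add_assoc, Gamma_add_one hxy, Gamma_add_one hy]
  rcases eq_or_ne (Gamma (x + 1) * Gamma (y + 1)) 0 with h | h
  · rcases mul_eq_zero.1 h with h | h <;> simp [h]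
  · field_simp

lemma Gamma_mul_rpow_div_eq_gammaChoose (q : ℕ) (c x : ℝ) :
    Gamma (q + 1) * c ^ x / (Gamma (x + 1) * Gamma (q - x + 1)) =
      gammaChoose x (q - x) * c ^ x := by
  rw [gammaChoose, add_sub_cancel]
  ring

lemma sum_gammaChoose_natCast_mul_pow (c : ℝ) (q : ℕ) :
    ∑ j ∈ range (q + 1), gammaChoose j (q - j) * c ^ j = (1 + c) ^ q := by
  rw [add_comm 1 c, add_pow]
  refine sum_congr rfl fun j hj => ?_
  rw [gammaChoose_natCast_sub (Nat.lt_succ_iff.1 (mem_range.1 hj)), one_pow]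
  ring

lemma mul_integral_one_sub_sq_pow_succ (m : ℕ) :
    (2 * m + 3 : ℝ) * ∫ v in (0 : ℝ)..1, (1 - v ^ 2) ^ (m + 1) =
      (2 * m + 2) * ∫ v in (0 : ℝ)..1, (1 - v ^ 2) ^ m := by
  have hderiv : ∀ v ∈ Set.uIcc (0 : ℝ) 1, HasDerivAt (fun v : ℝ => v * (1 - v ^ 2) ^ (m + 1))
      ((2 * m + 3) * (1 - v ^ 2) ^ (m + 1) - (2 * m + 2) * (1 - v ^ 2) ^ m) v := by
    intro v _
    refine ((hasDerivAt_id' v).fun_mul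
      (((hasDerivAt_pow 2 v).const_sub 1).fun_pow (m + 1))).congr_deriv ?_
    simp only [Nat.add_sub_cancel, Nat.cast_add, Nat.cast_one, Nat.cast_ofNat]
    ring
  have hint (n : ℕ) : IntervalIntegrable (fun v : ℝ => (1 - v ^ 2) ^ n) MeasureTheory.volume 0 1 :=
    (by fun_prop : Continuous fun v : ℝ => (1 - v ^ 2) ^ n).intervalIntegrable 0 1
  have := intervalIntegral.integral_eq_sub_of_hasDerivAt hderiv
    (((hint _).const_mul _).sub ((hint _).const_mul _))
  rw [intervalIntegral.integral_sub ((hint _).const_mul _) ((hint _).const_mul _),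
    intervalIntegral.integral_const_mul, intervalIntegral.integral_const_mul] at this
  norm_num at this
  linarith

lemma gammaChoose_neg_half_eq_integral (m : ℕ) :
    gammaChoose (-1 / 2) (m + 1 / 2) = 2 / π * ∫ v in (0 : ℝ)..1, (1 - v ^ 2) ^ m := by
  induction m with
  | zero =>
    have hΓ : Gamma (3 / 2) = √π / 2 := by
      rw [show (3 / 2 : ℝ) = 1 / 2 + 1 by norm_num, Gamma_add_one (by norm_num),
        Gamma_one_half_eq]
      ring
    simp only [gammaChoose, CharP.cast_eq_zero]
    norm_num [hΓ, Gamma_one_half_eq]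
    field_simp
    rw [sq_sqrt pi_pos.le]
  | succ m ih =>
    have hrec := add_one_mul_gammaChoose_add_one (x := -1 / 2) (y := m + 1 / 2)
      (by positivity) (by linarith [(m.cast_nonneg : (0 : ℝ) ≤ m)])
    rw [ih] at hrec
    push_cast
    rw [show (m : ℝ) + 1 + 1 / 2 = m + 1 / 2 + 1 by ring]
    apply mul_left_cancel₀ (show (m : ℝ) + 1 / 2 + 1 ≠ 0 by positivity)
    rw [hrec]
    linear_combination (-1 / π) * mul_integral_one_sub_sq_pow_succ m

/-- `√c * halfOddSum c q` is the sum over the odd indices `k = 2 j + 1` of the theorem. -/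
noncomputable def halfOddSum (c : ℝ) (q : ℕ) : ℝ :=
  ∑ j ∈ range q, gammaChoose (j + 1 / 2) (q - (j + 1 / 2)) * c ^ j

lemma halfOddSum_succ (c : ℝ) (q : ℕ) :
    halfOddSum c (q + 1) =
      (1 + c) * halfOddSum c q + gammaChoose (-1 / 2) (q + 1 / 2) * (1 + c ^ q) := by
  have hpascal : ∀ j ∈ range (q + 1),
      gammaChoose (j + 1 / 2) ((q + 1 : ℕ) - (j + 1 / 2)) * c ^ j =
        gammaChoose (j - 1 / 2) (q - (j - 1 / 2)) * c ^ j +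
          gammaChoose (j + 1 / 2) (q - (j + 1 / 2)) * c ^ j := by
    intro j hj
    have hjq : (j : ℝ) ≤ q := by exact_mod_cast Nat.lt_succ_iff.1 (mem_range.1 hj)
    rw [gammaChoose_eq_sub_one_add (by positivity) (by push_cast; linarith), add_mul]
    congr 3 <;> push_cast <;> ring
  have hshift (j : ℕ) : gammaChoose ((j + 1 : ℕ) - 1 / 2) (q - ((j + 1 : ℕ) - 1 / 2)) =
      gammaChoose (j + 1 / 2) (q - (j + 1 / 2)) := by
    congr 1 <;> push_cast <;> ring
  have hshifted : ∑ j ∈ range q,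
      gammaChoose ((j + 1 : ℕ) - 1 / 2) (q - ((j + 1 : ℕ) - 1 / 2)) * c ^ (j + 1) =
        c * halfOddSum c q := by
    rw [halfOddSum, mul_sum]
    exact sum_congr rfl fun j _ => by rw [hshift, pow_succ]; ring
  rw [halfOddSum, sum_congr rfl hpascal, sum_add_distrib, sum_range_succ', sum_range_succ,
    hshifted, ← halfOddSum, Nat.cast_zero, show (0 : ℝ) - 1 / 2 = -1 / 2 by norm_num,
    show (q : ℝ) - (-1 / 2) = q + 1 / 2 by ring, show (q : ℝ) - (q + 1 / 2) = -1 / 2 by ring,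
    gammaChoose_comm (q + 1 / 2)]
  ring

lemma halfOddSum_eq_pow_mul_sum {c : ℝ} (hc : 1 + c ≠ 0) (q : ℕ) :
    halfOddSum c q = (1 + c) ^ q *
      ∑ m ∈ range q, gammaChoose (-1 / 2) (m + 1 / 2) * (1 + c ^ m) / (1 + c) ^ (m + 1) := by
  induction q with
  | zero => simp [halfOddSum]
  | succ q ih =>
    rw [halfOddSum_succ, ih, sum_range_succ]
    field_simp
    ring

lemma sum_pow_div_pow_succ_le {x b : ℝ} (hx : 0 ≤ x) (hxb : x < b) (n : ℕ) :
    ∑ m ∈ range n, x ^ m / b ^ (m + 1) ≤ 1 / (b - x) := by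
  have hb : 0 < b := hx.trans_lt hxb
  have hgeom := geom_sum_Ico_le_of_lt_one (m := 0) (n := n) (div_nonneg hx hb.le)
    ((div_lt_one hb).2 hxb)
  rw [Nat.Ico_zero_eq_range, pow_zero] at hgeom
  calc ∑ m ∈ range n, x ^ m / b ^ (m + 1) = (∑ m ∈ range n, (x / b) ^ m) / b := by
        rw [sum_div]
        exact sum_congr rfl fun m _ => by rw [div_pow, pow_succ, div_div]
    _ ≤ 1 / (1 - x / b) / b := by gcongr
    _ = 1 / (b - x) := by field_simp

lemma sum_one_sub_sq_pow_mul_le {c v : ℝ} (hc : 0 < c) (hv : v ^ 2 ≤ 1) (n : ℕ) :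
    ∑ m ∈ range n, (1 - v ^ 2) ^ m * (1 + c ^ m) / (1 + c) ^ (m + 1) ≤
      1 / (c + v ^ 2) + 1 / (1 + c * v ^ 2) := by
  have hsplit : ∀ m ∈ range n, (1 - v ^ 2) ^ m * (1 + c ^ m) / (1 + c) ^ (m + 1) =
      (1 - v ^ 2) ^ m / (1 + c) ^ (m + 1) + (c * (1 - v ^ 2)) ^ m / (1 + c) ^ (m + 1) := by
    intro m _
    rw [mul_pow, ← add_div]
    ring
  rw [sum_congr rfl hsplit, sum_add_distrib]
  have hv0 : 0 ≤ v ^ 2 := sq_nonneg v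
  have h1 := sum_pow_div_pow_succ_le (x := 1 - v ^ 2) (b := 1 + c) (by linarith) (by linarith) n
  have h2 := sum_pow_div_pow_succ_le (x := c * (1 - v ^ 2)) (b := 1 + c) (by nlinarith)
    (by nlinarith) n
  rw [show 1 + c - (1 - v ^ 2) = c + v ^ 2 by ring] at h1
  rw [show 1 + c - c * (1 - v ^ 2) = 1 + c * v ^ 2 by ring] at h2
  exact add_le_add h1 h2

lemma integral_sqrt_mul_inv_add_sq {c : ℝ} (hc : 0 < c) :
    ∫ v in (0 : ℝ)..1, √c * (1 / (c + v ^ 2) + 1 / (1 + c * v ^ 2)) = π / 2 := by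
  have hs : 0 < √c := sqrt_pos.2 hc
  have hderiv : ∀ v ∈ Set.uIcc (0 : ℝ) 1,
      HasDerivAt (fun v => arctan (v / √c) + arctan (√c * v))
        (√c * (1 / (c + v ^ 2) + 1 / (1 + c * v ^ 2))) v := by
    intro v _
    refine (((hasDerivAt_id' v).div_const √c).arctan.add
      ((hasDerivAt_id' v).const_mul √c).arctan).congr_deriv ?_
    have : c + v ^ 2 ≠ 0 := by positivity
    have : 1 + c * v ^ 2 ≠ 0 := by positivity
    field_simp
    rw [sq_sqrt hc.le]
    ring
  have hcont : Continuous fun v : ℝ => √c * (1 / (c + v ^ 2) + 1 / (1 + c * v ^ 2)) := by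
    fun_prop (disch := intro; positivity)
  rw [intervalIntegral.integral_eq_sub_of_hasDerivAt hderiv (hcont.intervalIntegrable 0 1)]
  simp only [zero_div, mul_zero, arctan_zero, add_zero, one_div, mul_one, sub_zero]
  rw [arctan_inv_of_pos hs]
  ring

lemma sqrt_mul_sum_gammaChoose_le_one {c : ℝ} (hc : 0 < c) (n : ℕ) :
    √c * ∑ m ∈ range n, gammaChoose (-1 / 2) (m + 1 / 2) * (1 + c ^ m) / (1 + c) ^ (m + 1) ≤
      1 := by
  have hcont (m : ℕ) :
      Continuous fun v : ℝ => (1 - v ^ 2) ^ m * (1 + c ^ m) / (1 + c) ^ (m + 1) := by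
    fun_prop
  have hrepr : √c * ∑ m ∈ range n,
        gammaChoose (-1 / 2) (m + 1 / 2) * (1 + c ^ m) / (1 + c) ^ (m + 1) =
      2 / π * ∫ v in (0 : ℝ)..1,
        √c * ∑ m ∈ range n, (1 - v ^ 2) ^ m * (1 + c ^ m) / (1 + c) ^ (m + 1) := by
    rw [intervalIntegral.integral_const_mul, intervalIntegral.integral_finsetSum
      fun m _ => (hcont m).intervalIntegrable 0 1, mul_sum, mul_sum, mul_sum]
    refine sum_congr rfl fun m _ => ?_
    simp only [gammaChoose_neg_half_eq_integral, mul_div_assoc,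
      intervalIntegral.integral_mul_const]
    ring
  have hbound : ∫ v in (0 : ℝ)..1,
        √c * ∑ m ∈ range n, (1 - v ^ 2) ^ m * (1 + c ^ m) / (1 + c) ^ (m + 1) ≤
      ∫ v in (0 : ℝ)..1, √c * (1 / (c + v ^ 2) + 1 / (1 + c * v ^ 2)) := by
    refine intervalIntegral.integral_mono_on zero_le_one
      ((continuous_const.mul (continuous_finsetSum _ fun m _ => hcont m)).intervalIntegrable 0 1)
      ((by fun_prop (disch := intro; positivity) : Continuous fun v : ℝ =>
        √c * (1 / (c + v ^ 2) + 1 / (1 + c * v ^ 2))).intervalIntegrable 0 1) fun v hv => ?_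
    gcongr
    exact sum_one_sub_sq_pow_mul_le hc (by nlinarith [hv.1, hv.2]) n
  rw [hrepr]
  calc 2 / π * _ ≤ 2 / π * (π / 2) := by
        gcongr
        exact hbound.trans_eq (integral_sqrt_mul_inv_add_sq hc)
    _ = 1 := by field_simp

lemma sum_range_filter_even {M : Type*} [AddCommMonoid M] (f : ℕ → M) (n : ℕ) :
    ∑ k ∈ (range (2 * n + 1)).filter (fun k => Even k), f k =
      ∑ j ∈ range (n + 1), f (2 * j) := by
  have himage : (range (2 * n + 1)).filter (fun k => Even k) = (range (n + 1)).image (2 * ·) := by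
    ext k
    simp only [mem_filter, mem_range, mem_image, even_iff_exists_two_mul]
    constructor
    · rintro ⟨hk, j, rfl⟩
      exact ⟨j, by omega, rfl⟩
    · rintro ⟨j, hj, rfl⟩
      exact ⟨by omega, j, rfl⟩
  rw [himage, sum_image fun a _ b _ h => by simpa using h]

lemma sum_range_filter_odd {M : Type*} [AddCommMonoid M] (f : ℕ → M) (n : ℕ) :
    ∑ k ∈ (range (2 * n)).filter (fun k => Odd k), f k = ∑ j ∈ range n, f (2 * j + 1) := by
  have himage : (range (2 * n)).filter (fun k => Odd k) = (range n).image (2 * · + 1) := by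
    ext k
    simp only [mem_filter, mem_range, mem_image, odd_iff_exists_bit1]
    constructor
    · rintro ⟨hk, j, rfl⟩
      exact ⟨j, by omega, rfl⟩
    · rintro ⟨j, hj, rfl⟩
      exact ⟨by omega, j, rfl⟩
  rw [himage, sum_image fun a _ b _ h => by simpa using h]

theorem half_binomial_even_ge_odd_general (q : ℕ) (c : ℝ) (hc0 : 0 < c) :
    ∑ k ∈ (Finset.range (2 * q + 1)).filter (fun k => Even k),
        Real.Gamma ((q : ℝ) + 1) * c ^ ((k : ℝ) / 2) /
          (Real.Gamma ((k : ℝ) / 2 + 1) * Real.Gamma ((q : ℝ) - (k : ℝ) / 2 + 1)) ≥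
      ∑ k ∈ (Finset.range (2 * q)).filter (fun k => Odd k),
        Real.Gamma ((q : ℝ) + 1) * c ^ ((k : ℝ) / 2) /
          (Real.Gamma ((k : ℝ) / 2 + 1) * Real.Gamma ((q : ℝ) - (k : ℝ) / 2 + 1)) := by
  have heven (j : ℕ) : ((2 * j : ℕ) : ℝ) / 2 = j := by push_cast; ring
  have hodd (j : ℕ) : ((2 * j + 1 : ℕ) : ℝ) / 2 = j + 1 / 2 := by push_cast; ring
  have hsqrt (j : ℕ) : c ^ ((j : ℝ) + 1 / 2) = √c * c ^ j := by
    rw [rpow_add hc0, rpow_natCast, sqrt_eq_rpow, mul_comm]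
  simp only [Gamma_mul_rpow_div_eq_gammaChoose, sum_range_filter_even, sum_range_filter_odd,
    heven, hodd, rpow_natCast, hsqrt, mul_left_comm _ √c, ← mul_sum, ← halfOddSum.eq_1,
    sum_gammaChoose_natCast_mul_pow, ge_iff_le]
  rw [halfOddSum_eq_pow_mul_sum (by positivity)]
  calc √c * ((1 + c) ^ q * _) = (1 + c) ^ q * (√c * _) := mul_left_comm _ _ _
    _ ≤ (1 + c) ^ q * 1 := by gcongr; exact sqrt_mul_sum_gammaChoose_le_one hc0 q
    _ = (1 + c) ^ q := mul_one _

/-- Even-index terms of the half-binomial sum dominate the odd-index terms. -/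
theorem half_binomial_even_ge_odd (q : ℕ) (hq : 0 < q) (c : ℝ) (hc0 : 0 < c) (hc1 : c < 1) :
    ∑ k ∈ (Finset.range (2 * q + 1)).filter (fun k => Even k),
        Real.Gamma ((q : ℝ) + 1) * c ^ ((k : ℝ) / 2) /
          (Real.Gamma ((k : ℝ) / 2 + 1) * Real.Gamma ((q : ℝ) - (k : ℝ) / 2 + 1)) ≥
      ∑ k ∈ (Finset.range (2 * q)).filter (fun k => Odd k),
        Real.Gamma ((q : ℝ) + 1) * c ^ ((k : ℝ) / 2) /
          (Real.Gamma ((k : ℝ) / 2 + 1) * Real.Gamma ((q : ℝ) - (k : ℝ) / 2 + 1)) :=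
  half_binomial_even_ge_odd_general q c hc0
end

section
/- Gautschi's inequality: for real x > 0 and s ∈ (0,1), x^{1−s} < Γ(x+1)/Γ(x+s) < (x+1)^{1−s}. -/
/-!
Log-convexity of `Γ` on `[y, y + 1]` together with `Γ (y + 1) = y Γ (y)` gives
`Γ (y + t) ≤ y ^ t Γ (y)` for `0 < t < 1`. Taking `y = x + s`, `t = 1 - s` bounds the ratio by
`(x + s) ^ (1 - s) < (x + 1) ^ (1 - s)`; taking `y = x + 1`, `t = s` bounds it below by
`(x + s) / (x + 1) ^ s`, which exceeds `x ^ (1 - s)` by the weighted AM-GM inequality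
`x ^ (1 - s) (x + 1) ^ s < (1 - s) x + s (x + 1) = x + s`.
-/

open Real

namespace Real

theorem Gamma_add_le_rpow_mul_Gamma {y t : ℝ} (hy : 0 < y) (ht0 : 0 < t) (ht1 : t < 1) :
    Gamma (y + t) ≤ y ^ t * Gamma y := by
  have hG := Gamma_pos_of_pos hy
  calc Gamma (y + t) = Gamma ((1 - t) * y + t * (y + 1)) := by ring_nf
    _ ≤ Gamma y ^ (1 - t) * Gamma (y + 1) ^ t :=
        Gamma_mul_add_mul_le_rpow_Gamma_mul_rpow_Gamma hy (by linarith) (by linarith) ht0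
          (by ring)
    _ = y ^ t * Gamma y := by
        rw [Gamma_add_one hy.ne', mul_rpow hy.le hG.le, rpow_sub hG, rpow_one]
        field_simp

variable {x s : ℝ}

theorem Gamma_add_one_div_Gamma_add_le_rpow (hx : 0 < x) (hs0 : 0 < s) (hs1 : s < 1) :
    Gamma (x + 1) / Gamma (x + s) ≤ (x + s) ^ (1 - s) := by
  have hxs : 0 < x + s := by linarith
  rw [div_le_iff₀ (Gamma_pos_of_pos hxs)]
  calc Gamma (x + 1) = Gamma (x + s + (1 - s)) := by ring_nf
    _ ≤ (x + s) ^ (1 - s) * Gamma (x + s) :=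
        Gamma_add_le_rpow_mul_Gamma hxs (by linarith) (by linarith)

theorem add_div_rpow_le_Gamma_add_one_div_Gamma_add (hx : 0 < x) (hs0 : 0 < s) (hs1 : s < 1) :
    (x + s) / (x + 1) ^ s ≤ Gamma (x + 1) / Gamma (x + s) := by
  have hxs : 0 < x + s := by linarith
  have hx1 : 0 < x + 1 := by linarith
  rw [div_le_div_iff₀ (rpow_pos_of_pos hx1 s) (Gamma_pos_of_pos hxs), ← Gamma_add_one hxs.ne']
  calc Gamma (x + s + 1) = Gamma (x + 1 + s) := by ring_nf
    _ ≤ (x + 1) ^ s * Gamma (x + 1) := Gamma_add_le_rpow_mul_Gamma hx1 hs0 hs1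
    _ = Gamma (x + 1) * (x + 1) ^ s := mul_comm _ _

theorem rpow_one_sub_lt_add_div_rpow (hx : 0 < x) (hs0 : 0 < s) (hs1 : s < 1) :
    x ^ (1 - s) < (x + s) / (x + 1) ^ s := by
  rw [lt_div_iff₀ (rpow_pos_of_pos (by linarith) s)]
  calc x ^ (1 - s) * (x + 1) ^ s < (1 - s) * x + s * (x + 1) :=
        (geom_mean_lt_arith_mean2_weighted_iff_of_pos (by linarith) hs0 hx.le (by linarith)
          (by ring)).2 (by linarith)
    _ = x + s := by ring

end Real

/-- Gautschi's inequality for the ratio of Gamma functions. -/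
theorem gautschi_inequality (x s : ℝ) (hx : 0 < x) (hs0 : 0 < s) (hs1 : s < 1) :
    x ^ (1 - s) < Real.Gamma (x + 1) / Real.Gamma (x + s) ∧
      Real.Gamma (x + 1) / Real.Gamma (x + s) < (x + 1) ^ (1 - s) :=
  ⟨(rpow_one_sub_lt_add_div_rpow hx hs0 hs1).trans_le
      (add_div_rpow_le_Gamma_add_one_div_Gamma_add hx hs0 hs1),
    (Gamma_add_one_div_Gamma_add_le_rpow hx hs0 hs1).trans_lt
      (rpow_lt_rpow (by linarith) (by linarith) (by linarith))⟩
end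

section
/- Gauss' summation formula: for complex (or real) parameters a, b, c with c not a nonpositive integer and Re(c − a − b) > 0, the Gaussian hypergeometric series ₂F₁(a, b; c; 1) = Σ_{r=0}^∞ (a)_r (b)_r / ((c)_r r!) converges and equals Γ(c)Γ(c−a−b)/(Γ(c−a)Γ(c−b)). -/
/-!
For the coefficients `tᵣ(c)` of `₂F₁(a, b; c; 1)` one has the termwise identity
`c (c-a-b) tᵣ(c) - (c-a)(c-b) tᵣ(c+1) = c (r tᵣ(c) - (r+1) tᵣ₊₁(c))`.
Euler's product formula for `Γ` gives `tₙ₊₁ = O(n^{Re(a+b-c)-1})`, so the series converges and the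
boundary term `n tₙ` of the telescoping sum tends to `0`: this is Gauss' contiguous relation
`c (c-a-b) F(c) = (c-a)(c-b) F(c+1)`. Iterating it,
`F(c) = (c-a)ₖ(c-b)ₖ / ((c)ₖ(c-a-b)ₖ) · F(c+k)` for every `k`. As `k → ∞` the Pochhammer
quotient tends to `Γ(c)Γ(c-a-b)/(Γ(c-a)Γ(c-b))`, again by Euler's product formula, and
`F(c+k) → 1` by dominated convergence.
-/

open Complex Filter Finset Topology Asymptotics Polynomial
open scoped Nat

theorem ascPochhammer_eval_eq_prod_range {R : Type*} [CommSemiring R] (n : ℕ) (x : R) :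
    (ascPochhammer R n).eval x = ∏ j ∈ range n, (x + j) := by
  induction n with
  | zero => simp
  | succ n ih => rw [ascPochhammer_succ_eval, ih, prod_range_succ]

namespace Complex

theorem ne_neg_natCast_of_re_pos {s : ℂ} (hs : 0 < s.re) (m : ℕ) : s ≠ -m := by
  rintro rfl
  simp only [neg_re, natCast_re, Left.neg_pos_iff] at hs
  exact (Nat.cast_nonneg m).not_gt hs

theorem add_natCast_ne_neg_natCast {c : ℂ} (hc : ∀ m : ℕ, c ≠ -m) (k m : ℕ) : c + k ≠ -m :=
  fun h ↦ hc (m + k) (by push_cast; linear_combination h)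

theorem ascPochhammer_eval_ne_zero {c : ℂ} (hc : ∀ m : ℕ, c ≠ -m) (r : ℕ) :
    (ascPochhammer ℂ r).eval c ≠ 0 := by
  simp only [ne_eq, ascPochhammer_eval_eq_zero_iff, not_exists, not_and]
  intro k _ hk
  exact hc k (by rw [hk, neg_neg])

theorem ascPochhammer_succ_eval_eq_mul_add_one (r : ℕ) (c : ℂ) :
    (ascPochhammer ℂ (r + 1)).eval c = c * (ascPochhammer ℂ r).eval (c + 1) := by
  rw [ascPochhammer_succ_left, eval_mul, eval_X, eval_comp, eval_add, eval_X, eval_one]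

theorem norm_ascPochhammer_eval_ofReal_le {s : ℝ} {z : ℂ} (hs : 0 ≤ s) (hsz : s ≤ z.re)
    (r : ℕ) : ‖(ascPochhammer ℂ r).eval (s : ℂ)‖ ≤ ‖(ascPochhammer ℂ r).eval z‖ := by
  simp only [ascPochhammer_eval_eq_prod_range, norm_prod]
  refine prod_le_prod (fun _ _ ↦ norm_nonneg _) fun j _ ↦ ?_
  rw [show (s : ℂ) + j = ((s + j : ℝ) : ℂ) by push_cast; rfl, norm_real,
    Real.norm_of_nonneg (by positivity)]
  calc s + j ≤ (z + j).re := by simp only [add_re, natCast_re]; linarith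
    _ ≤ ‖z + j‖ := re_le_norm _

theorem inv_GammaSeq_eq (x : ℂ) (n : ℕ) :
    (GammaSeq x n)⁻¹ = (ascPochhammer ℂ (n + 1)).eval x / ((n : ℂ) ^ x * n !) := by
  rw [GammaSeq, inv_div, ascPochhammer_eval_eq_prod_range]

-- `Gamma` is `0` at its poles, where both sides are eventually `0`.
theorem tendsto_inv_GammaSeq (x : ℂ) :
    Tendsto (fun n ↦ (GammaSeq x n)⁻¹) atTop (𝓝 (Gamma x)⁻¹) := by
  by_cases! hx : ∃ m : ℕ, x = -m
  · obtain ⟨m, rfl⟩ := hx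
    rw [Gamma_neg_nat_eq_zero, inv_zero]
    refine tendsto_const_nhds.congr' ?_
    filter_upwards [eventually_ge_atTop m] with n hn
    rw [inv_GammaSeq_eq, ascPochhammer_eval_neg_coe_nat_of_lt (by omega), zero_div]
  · exact (GammaSeq_tendsto_Gamma x).inv₀ (Gamma_ne_zero hx)

theorem cpow_mul_ascPochhammer_ratio_eq {n : ℕ} (hn : n ≠ 0) (x y z w : ℂ) :
    (n : ℂ) ^ (z + w - x - y) *
        ((ascPochhammer ℂ (n + 1)).eval x * (ascPochhammer ℂ (n + 1)).eval y /
          ((ascPochhammer ℂ (n + 1)).eval z * (ascPochhammer ℂ (n + 1)).eval w)) =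
      (GammaSeq x n)⁻¹ * (GammaSeq y n)⁻¹ / ((GammaSeq z n)⁻¹ * (GammaSeq w n)⁻¹) := by
  have hn' : (n : ℂ) ≠ 0 := Nat.cast_ne_zero.2 hn
  have hfact : (n ! : ℂ) ≠ 0 := Nat.cast_ne_zero.2 n.factorial_ne_zero
  simp only [inv_GammaSeq_eq, cpow_sub _ _ hn', cpow_add _ _ hn']
  field_simp

theorem tendsto_cpow_mul_ascPochhammer_ratio (x y : ℂ) {z w : ℂ} (hz : ∀ m : ℕ, z ≠ -m)
    (hw : ∀ m : ℕ, w ≠ -m) :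
    Tendsto (fun n : ℕ ↦ (n : ℂ) ^ (z + w - x - y) *
        ((ascPochhammer ℂ (n + 1)).eval x * (ascPochhammer ℂ (n + 1)).eval y /
          ((ascPochhammer ℂ (n + 1)).eval z * (ascPochhammer ℂ (n + 1)).eval w)))
      atTop (𝓝 (Gamma z * Gamma w / (Gamma x * Gamma y))) := by
  have h := ((tendsto_inv_GammaSeq x).mul (tendsto_inv_GammaSeq y)).div
    ((tendsto_inv_GammaSeq z).mul (tendsto_inv_GammaSeq w))
    (mul_ne_zero (inv_ne_zero (Gamma_ne_zero hz)) (inv_ne_zero (Gamma_ne_zero hw)))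
  rw [← mul_inv, ← mul_inv, inv_div_inv] at h
  refine h.congr' ?_
  filter_upwards [eventually_ne_atTop 0] with n hn
  exact (cpow_mul_ascPochhammer_ratio_eq hn x y z w).symm

theorem tendsto_cpow_mul_ordinaryHypergeometricCoefficient_succ (a b : ℂ) {c : ℂ}
    (hc : ∀ m : ℕ, c ≠ -m) :
    Tendsto (fun n : ℕ ↦
        (n : ℂ) ^ (c + 1 - a - b) * ordinaryHypergeometricCoefficient a b c (n + 1))
      atTop (𝓝 (Gamma c / (Gamma a * Gamma b))) := by
  have h := tendsto_cpow_mul_ascPochhammer_ratio a b hc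
    (ne_neg_natCast_of_re_pos (s := 1) (by simp))
  simp only [Gamma_one, mul_one, ascPochhammer_eval_one] at h
  refine h.congr fun n ↦ ?_
  simp only [ordinaryHypergeometricCoefficient]
  ring

theorem ordinaryHypergeometricCoefficient_succ_isBigO (a b : ℂ) {c : ℂ}
    (hc : ∀ m : ℕ, c ≠ -m) :
    (fun n : ℕ ↦ ordinaryHypergeometricCoefficient a b c (n + 1)) =O[atTop]
      fun n : ℕ ↦ (n : ℝ) ^ ((a + b - c).re - 1) := by
  have hpow : (fun n : ℕ ↦ (n : ℂ) ^ (a + b - c - 1)) =O[atTop]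
      fun n : ℕ ↦ (n : ℝ) ^ ((a + b - c).re - 1) := by
    refine IsBigO.of_bound' ?_
    filter_upwards [eventually_gt_atTop 0] with n hn
    rw [norm_natCast_cpow_of_pos hn, Real.norm_of_nonneg (by positivity), sub_re, one_re]
  have h := hpow.mul
    ((tendsto_cpow_mul_ordinaryHypergeometricCoefficient_succ a b hc).isBigO_one ℝ)
  simp only [mul_one] at h
  refine h.congr' ?_ EventuallyEq.rfl
  filter_upwards [eventually_ne_atTop 0] with n hn
  rw [← mul_assoc, ← cpow_add _ _ (Nat.cast_ne_zero.2 hn),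
    show a + b - c - 1 + (c + 1 - a - b) = 0 by ring, cpow_zero, one_mul]

theorem summable_norm_ordinaryHypergeometricCoefficient {a b c : ℂ} (hc : ∀ m : ℕ, c ≠ -m)
    (hre : 0 < (c - a - b).re) :
    Summable fun r ↦ ‖ordinaryHypergeometricCoefficient a b c r‖ := by
  rw [← summable_nat_add_iff 1]
  refine summable_of_isBigO_nat (Real.summable_nat_rpow.2 ?_)
    (ordinaryHypergeometricCoefficient_succ_isBigO a b hc).norm_left
  simp only [sub_re, add_re] at hre ⊢
  linarith

theorem tendsto_natCast_mul_ordinaryHypergeometricCoefficient {a b c : ℂ}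
    (hc : ∀ m : ℕ, c ≠ -m) (hre : 0 < (c - a - b).re) :
    Tendsto (fun r : ℕ ↦ (r : ℂ) * ordinaryHypergeometricCoefficient a b c r) atTop (𝓝 0) := by
  rw [← tendsto_add_atTop_iff_nat 1]
  have hlin : (fun n : ℕ ↦ ((n + 1 : ℕ) : ℂ)) =O[atTop] fun n : ℕ ↦ (n : ℝ) := by
    refine IsBigO.of_bound 2 ?_
    filter_upwards [eventually_ge_atTop 1] with n hn
    have : (1 : ℝ) ≤ n := by exact_mod_cast hn
    simp only [norm_natCast, Real.norm_natCast]
    push_cast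
    linarith
  refine (hlin.mul (ordinaryHypergeometricCoefficient_succ_isBigO a b hc)).trans_tendsto ?_
  refine ((tendsto_rpow_neg_atTop hre).comp tendsto_natCast_atTop_atTop).congr' ?_
  filter_upwards [eventually_gt_atTop 0] with n hn
  have hn' : (n : ℝ) ≠ 0 := by positivity
  rw [Function.comp_apply, Real.rpow_sub_one hn', mul_div_cancel₀ _ hn']
  congr 1
  simp only [sub_re, add_re]
  ring

theorem ordinaryHypergeometricCoefficient_contiguous (a b : ℂ) {c : ℂ}
    (hc : ∀ m : ℕ, c ≠ -m) (r : ℕ) :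
    c * (c - a - b) * ordinaryHypergeometricCoefficient a b c r
      - (c - a) * (c - b) * ordinaryHypergeometricCoefficient a b (c + 1) r
      = c * (r * ordinaryHypergeometricCoefficient a b c r
          - ((r + 1 : ℕ) : ℂ) * ordinaryHypergeometricCoefficient a b c (r + 1)) := by
  have hc0 : c ≠ 0 := by simpa using hc 0
  have hcr : c + r ≠ 0 := by simpa using add_natCast_ne_neg_natCast hc r 0
  have hshift :
      (ascPochhammer ℂ r).eval (c + 1) = (ascPochhammer ℂ r).eval c * (c + r) / c := by
    rw [eq_div_iff hc0, mul_comm, ← ascPochhammer_succ_eval_eq_mul_add_one,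
      ascPochhammer_succ_eval]
  simp only [ordinaryHypergeometricCoefficient, ascPochhammer_succ_eval, Nat.factorial_succ,
    hshift]
  push_cast
  field_simp
  ring

theorem ordinaryHypergeometric_one_eq_tsum (a b c : ℂ) :
    ₂F₁ a b c (1 : ℂ) = ∑' r, ordinaryHypergeometricCoefficient a b c r := by
  simp [ordinaryHypergeometric_eq_tsum]

theorem hasSum_ordinaryHypergeometric_one {a b c : ℂ} (hc : ∀ m : ℕ, c ≠ -m)
    (hre : 0 < (c - a - b).re) :
    HasSum (ordinaryHypergeometricCoefficient a b c) (₂F₁ a b c (1 : ℂ)) := by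
  rw [ordinaryHypergeometric_one_eq_tsum]
  exact (summable_norm_ordinaryHypergeometricCoefficient hc hre).of_norm.hasSum

theorem ordinaryHypergeometric_one_contiguous {a b c : ℂ} (hc : ∀ m : ℕ, c ≠ -m)
    (hre : 0 < (c - a - b).re) :
    c * (c - a - b) * ₂F₁ a b c (1 : ℂ) = (c - a) * (c - b) * ₂F₁ a b (c + 1) (1 : ℂ) := by
  have hc' : ∀ m : ℕ, c + 1 ≠ -m := by simpa using add_natCast_ne_neg_natCast hc 1
  have hre' : 0 < (c + 1 - a - b).re := by
    simp only [sub_re, add_re, one_re] at hre ⊢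
    linarith
  have hsum := ((hasSum_ordinaryHypergeometric_one hc hre).mul_left (c * (c - a - b))).sub
    ((hasSum_ordinaryHypergeometric_one hc' hre').mul_left ((c - a) * (c - b)))
  have htel : Tendsto (fun n ↦ ∑ r ∈ range n,
      (c * (c - a - b) * ordinaryHypergeometricCoefficient a b c r
        - (c - a) * (c - b) * ordinaryHypergeometricCoefficient a b (c + 1) r)) atTop (𝓝 0) := by
    simp_rw [ordinaryHypergeometricCoefficient_contiguous a b hc, ← mul_sum, sum_range_sub',
      Nat.cast_zero, zero_mul, zero_sub]
    simpa using (tendsto_natCast_mul_ordinaryHypergeometricCoefficient hc hre).neg.const_mul c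
  exact sub_eq_zero.1 (tendsto_nhds_unique hsum.tendsto_sum_nat htel)

theorem ascPochhammer_mul_ordinaryHypergeometric_one {a b c : ℂ} (hc : ∀ m : ℕ, c ≠ -m)
    (hre : 0 < (c - a - b).re) (k : ℕ) :
    (ascPochhammer ℂ k).eval c * (ascPochhammer ℂ k).eval (c - a - b) * ₂F₁ a b c (1 : ℂ) =
      (ascPochhammer ℂ k).eval (c - a) * (ascPochhammer ℂ k).eval (c - b) *
        ₂F₁ a b (c + k) (1 : ℂ) := by
  induction k with
  | zero => simp
  | succ k ih =>
    have hrek : 0 < (c + k - a - b).re := by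
      simp only [sub_re, add_re, natCast_re] at hre ⊢
      linarith [(Nat.cast_nonneg k : (0 : ℝ) ≤ k)]
    have h := ordinaryHypergeometric_one_contiguous (add_natCast_ne_neg_natCast hc k) hrek
    simp only [ascPochhammer_succ_eval, Nat.cast_succ, ← add_assoc]
    linear_combination ((c + k) * (c - a - b + k)) * ih +
      ((ascPochhammer ℂ k).eval (c - a) * (ascPochhammer ℂ k).eval (c - b)) * h

theorem norm_ordinaryHypergeometricCoefficient_le (a b : ℂ) {s : ℝ} {z : ℂ} (hs : 0 < s)
    (hsz : s ≤ z.re) (r : ℕ) :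
    ‖ordinaryHypergeometricCoefficient a b z r‖ ≤
      ‖ordinaryHypergeometricCoefficient a b (s : ℂ) r‖ := by
  have hpos : 0 < ‖(ascPochhammer ℂ r).eval (s : ℂ)‖ :=
    norm_pos_iff.2 (ascPochhammer_eval_ne_zero (ne_neg_natCast_of_re_pos (by simpa)) r)
  simp only [ordinaryHypergeometricCoefficient, norm_mul, norm_inv]
  gcongr
  exact norm_ascPochhammer_eval_ofReal_le hs.le hsz r

theorem tendsto_ordinaryHypergeometricCoefficient_add_nat (a b c : ℂ) {r : ℕ} (hr : r ≠ 0) :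
    Tendsto (fun k : ℕ ↦ ordinaryHypergeometricCoefficient a b (c + k) r) atTop (𝓝 0) := by
  have hdeg : 0 < (ascPochhammer ℂ r).degree := by
    rw [degree_eq_natDegree (monic_ascPochhammer ℂ r).ne_zero, ascPochhammer_natDegree]
    exact_mod_cast Nat.pos_of_ne_zero hr
  have hnorm : Tendsto (fun k : ℕ ↦ ‖c + k‖) atTop atTop := by
    refine tendsto_atTop_mono (fun k ↦ re_le_norm _) ?_
    simpa using tendsto_atTop_add_const_left _ c.re tendsto_natCast_atTop_atTop
  have h := (tendsto_norm_atTop _ hdeg hnorm).inv_tendsto_atTop.const_mul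
    ‖(r ! : ℂ)⁻¹ * (ascPochhammer ℂ r).eval a * (ascPochhammer ℂ r).eval b‖
  rw [mul_zero] at h
  rw [tendsto_zero_iff_norm_tendsto_zero]
  simpa only [ordinaryHypergeometricCoefficient, norm_mul, norm_inv, Pi.inv_apply] using h

theorem tendsto_ordinaryHypergeometric_one_add_nat (a b c : ℂ) :
    Tendsto (fun k : ℕ ↦ ₂F₁ a b (c + k) (1 : ℂ)) atTop (𝓝 1) := by
  set s : ℝ := max 1 ((a + b).re + 1)
  have hs : 0 < s := lt_max_of_lt_left one_pos
  have hsab : 0 < ((s : ℂ) - a - b).re := by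
    simp only [sub_re, ofReal_re]
    linarith [le_max_right 1 ((a + b).re + 1), add_re a b]
  have hbound := summable_norm_ordinaryHypergeometricCoefficient
    (ne_neg_natCast_of_re_pos (s := s) (by simpa)) hsab
  have hpointwise (r : ℕ) :
      Tendsto (fun k : ℕ ↦ ordinaryHypergeometricCoefficient a b (c + k) r)
        atTop (𝓝 (if r = 0 then 1 else 0)) := by
    rcases eq_or_ne r 0 with rfl | hr
    · simp [ordinaryHypergeometricCoefficient]
    · simpa [hr] using tendsto_ordinaryHypergeometricCoefficient_add_nat a b c hr
  have hdom : ∀ᶠ k : ℕ in atTop, ∀ r,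
      ‖ordinaryHypergeometricCoefficient a b (c + k) r‖ ≤
        ‖ordinaryHypergeometricCoefficient a b (s : ℂ) r‖ := by
    filter_upwards [eventually_ge_atTop ⌈s - c.re⌉₊] with k hk r
    refine norm_ordinaryHypergeometricCoefficient_le a b hs ?_ r
    have := Nat.ceil_le.1 hk
    simp only [add_re, natCast_re]
    linarith
  simpa [ordinaryHypergeometric_one_eq_tsum] using
    tendsto_tsum_of_dominated_convergence hbound hpointwise hdom

theorem ordinaryHypergeometric_one_eq_Gamma {a b c : ℂ} (hc : ∀ m : ℕ, c ≠ -m)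
    (hre : 0 < (c - a - b).re) :
    ₂F₁ a b c (1 : ℂ) = Gamma c * Gamma (c - a - b) / (Gamma (c - a) * Gamma (c - b)) := by
  have hcab := ne_neg_natCast_of_re_pos hre
  have hQ := tendsto_cpow_mul_ascPochhammer_ratio (c - a) (c - b) hc hcab
  simp only [show c + (c - a - b) - (c - a) - (c - b) = 0 by ring, cpow_zero, one_mul] at hQ
  have h := hQ.mul
    ((tendsto_add_atTop_iff_nat 1).2 (tendsto_ordinaryHypergeometric_one_add_nat a b c))
  rw [mul_one] at h
  refine tendsto_nhds_unique (tendsto_const_nhds.congr fun n ↦ ?_) h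
  rw [div_mul_eq_mul_div, eq_div_iff (mul_ne_zero (ascPochhammer_eval_ne_zero hc _)
    (ascPochhammer_eval_ne_zero hcab _)), mul_comm,
    ascPochhammer_mul_ordinaryHypergeometric_one hc hre]

end Complex

/-- Gauss' summation formula for the Gaussian hypergeometric series at `z = 1`. -/
theorem gauss_hypergeometric_sum (a b c : ℂ)
    (hc : ∀ m : ℕ, c ≠ -(m : ℂ))
    (hre : 0 < (c - a - b).re) :
    HasSum (fun r : ℕ =>
        (ascPochhammer ℂ r).eval a * (ascPochhammer ℂ r).eval b /
          ((ascPochhammer ℂ r).eval c * (r.factorial : ℂ)))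
      (Complex.Gamma c * Complex.Gamma (c - a - b) /
        (Complex.Gamma (c - a) * Complex.Gamma (c - b))) := by
  rw [← ordinaryHypergeometric_one_eq_Gamma hc hre]
  convert hasSum_ordinaryHypergeometric_one hc hre using 2 with r
  rw [ordinaryHypergeometricCoefficient, div_eq_mul_inv, mul_inv]
  ring
end
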